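/- Let D be a rich domain that is a decomposable domain. Then for all n ≥ 2, every strategy-proof unanimous rule f : D^n → A satisfies the tops-only property. -/

import Mathlib

noncomputable section

universe u

/-- A (strict) preference: a complete, antisymmetric, transitive binary relation,
i.e. a strict linear order, on `α`.  `rel a b` reads "`a` is strictly preferred to `b`". -/
structure Pref (α : Type u) : Type u where
  rel : α → α → Prop
  asymm : ∀ a b, rel a b → ¬ rel b a
  trans : ∀ a b c, rel a b → rel b c → rel a c
  total : ∀ a b, a ≠ b → rel a b ∨ rel b a

namespace Pref

variable {α : Type u}

theorem exists_top [Finite α] [Nonempty α] (P : Pref α) :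
    ∃ a : α, ∀ b, b ≠ a → P.rel a b := by
  haveI : IsTrans α P.rel := ⟨P.trans⟩
  haveI : IsIrrefl α P.rel := ⟨fun a h => P.asymm a a h h⟩
  obtain ⟨a, -, ha⟩ :=
    (Finite.wellFounded_of_trans_of_irrefl P.rel).has_min Set.univ
      ⟨Classical.arbitrary α, trivial⟩
  refine ⟨a, fun b hb => ?_⟩
  rcases P.total a b (fun h => hb h.symm) with h | h
  · exact h
  · exact absurd h (ha b trivial)

/-- The top-ranked alternative `r₁(P)` of a preference. -/
def top [Finite α] [Nonempty α] (P : Pref α) : α := P.exists_top.choose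

theorem top_spec [Finite α] [Nonempty α] (P : Pref α) :
    ∀ b, b ≠ P.top → P.rel P.top b := P.exists_top.choose_spec

/-- `rank P a = k` means that `a` is the `k`-th ranked alternative `r_k(P)`. -/
def rank (P : Pref α) (a : α) : ℕ := {b | P.rel b a}.ncard + 1

/-- The induced marginal preference `[P]^s` on component `s`:
derived from `P` by referring to the off-`s` components of the top alternative. -/
def marg {m : ℕ} {A : Fin m → Type u} [∀ s, Fintype (A s)] [∀ s, Nonempty (A s)]
    (P : Pref (∀ s, A s)) (s : Fin m) : Pref (A s) where
  rel x y := P.rel (Function.update P.top s x) (Function.update P.top s y)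
  asymm _ _ h := P.asymm _ _ h
  trans _ _ _ h₁ h₂ := P.trans _ _ _ h₁ h₂
  total x y hxy := P.total _ _ fun h => hxy (by
    have := congrFun h s
    simpa using this)

end Pref

section SocialChoice

variable {m : ℕ} {A : Fin m → Type u}

/-- `a` and `b` are similar, differing exactly in component `s`: `M(a,b) = {s}`. -/
def SimilarAt (a b : ∀ s, A s) (s : Fin m) : Prop :=
  a s ≠ b s ∧ ∀ t, t ≠ s → a t = b t

/-- The "slice" `(A^s, x^{-s})` of alternatives agreeing with `x` off component `s`. -/
def Slice (s : Fin m) (x : ∀ t, A t) : Set (∀ t, A t) :=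
  {a | ∀ t, t ≠ s → a t = x t}

variable [∀ s, Fintype (A s)] [∀ s, Nonempty (A s)]

/-- The induced marginal domain `[D]^s`. -/
def margDomain (D : Set (Pref (∀ s, A s))) (s : Fin m) : Set (Pref (A s)) :=
  (fun P => Pref.marg P s) '' D

/-- A preference is minimal-richness witnessed: every alternative is some preference's top. -/
def MinimallyRich (D : Set (Pref (∀ s, A s))) : Prop :=
  ∀ a : ∀ s, A s, ∃ P ∈ D, Pref.top P = a

/-- A separable preference. -/
def Separable (P : Pref (∀ s, A s)) : Prop :=
  ∃ Q : ∀ s, Pref (A s), ∀ (s : Fin m) (a b : ∀ t, A t),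
    SimilarAt a b s → (Q s).rel (a s) (b s) → P.rel a b

/-- A top-separable preference. -/
def TopSeparable (P : Pref (∀ s, A s)) : Prop :=
  ∀ (s : Fin m) (a b : ∀ t, A t), SimilarAt a b s → a s = Pref.top P s → P.rel a b

end SocialChoice

/-- Two preferences are complete reversals. -/
def CompleteReversals {α : Type u} (P P' : Pref α) : Prop :=
  ∀ a b, P.rel a b ↔ P'.rel b a

section SCFProps

variable {β : Type u}

/-- Unanimity of a (marginal) social choice function on domain `E`. -/
def Unanimous [Finite β] [Nonempty β] (E : Set (Pref β)) {n : ℕ}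
    (f : (Fin n → E) → β) : Prop :=
  ∀ (p : Fin n → E) (a : β), (∀ i, Pref.top (p i).1 = a) → f p = a

/-- Strategy-proofness of a (marginal) social choice function on domain `E`. -/
def StrategyProof (E : Set (Pref β)) {n : ℕ} (f : (Fin n → E) → β) : Prop :=
  ∀ (p : Fin n → E) (i : Fin n) (Q : E),
    f p ≠ f (Function.update p i Q) →
    (p i).1.rel (f p) (f (Function.update p i Q))

/-- The tops-only property. -/
def TopsOnly [Finite β] [Nonempty β] (E : Set (Pref β)) {n : ℕ}
    (f : (Fin n → E) → β) : Prop :=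
  ∀ p p' : Fin n → E, (∀ i, Pref.top (p i).1 = Pref.top (p' i).1) → f p = f p'

end SCFProps

section Decomp

variable {m : ℕ} {A : Fin m → Type u} [∀ s, Fintype (A s)] [∀ s, Nonempty (A s)]

/-- The profile of induced marginal preferences `([P₁]^s, …, [Pₙ]^s)`. -/
def margProfile (D : Set (Pref (∀ s, A s))) (s : Fin m) {n : ℕ}
    (p : Fin n → D) : Fin n → (margDomain D s) :=
  fun i => ⟨Pref.marg (p i).1 s, ⟨(p i).1, (p i).2, rfl⟩⟩

/-- `f` is decomposed by the family of marginal SCFs `g`. -/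
def Decomposable (D : Set (Pref (∀ s, A s))) {n : ℕ}
    (f : (Fin n → D) → (∀ s, A s))
    (g : ∀ s : Fin m, (Fin n → (margDomain D s)) → A s) : Prop :=
  ∀ p : Fin n → D, ∀ s, f p s = g s (margProfile D s p)

/-- A decomposable domain: for every `n ≥ 2` and every SCF, being a strategy-proof
unanimous rule is equivalent to being decomposable into strategy-proof unanimous
marginal rules. -/
def DecomposableDomain (D : Set (Pref (∀ s, A s))) : Prop :=
  ∀ n : ℕ, 2 ≤ n → ∀ f : (Fin n → D) → (∀ s, A s),
    (Unanimous D f ∧ StrategyProof D f) ↔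
      ∃ g : ∀ s : Fin m, (Fin n → (margDomain D s)) → A s,
        Decomposable D f g ∧
        ∀ s, Unanimous (margDomain D s) (g s) ∧ StrategyProof (margDomain D s) (g s)

/-- Diversity⁺: `D` contains two separable preferences that are complete reversals. -/
def DiversityPlus (D : Set (Pref (∀ s, A s))) : Prop :=
  ∃ P ∈ D, ∃ P' ∈ D, Separable P ∧ Separable P' ∧ CompleteReversals P P'

end Decomp

/-- Adjacency of two preferences: they coincide except that two alternatives ranked
consecutively in `P` occupy the same two positions in reversed order in `P'`. -/
def Adjacent {β : Type u} (P P' : Pref β) : Prop :=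
  ∃ a b : β, a ≠ b ∧
    P.rank b = P.rank a + 1 ∧ P'.rank b = P.rank a ∧ P'.rank a = P.rank a + 1 ∧
    ∀ c, c ≠ a → c ≠ b → P.rank c = P'.rank c

section AdjPlus

variable {m : ℕ} {A : Fin m → Type u} [∀ s, Fintype (A s)] [∀ s, Nonempty (A s)]

/-- Adjacency⁺ of two (separable) preferences. -/
def AdjacentPlus (P P' : Pref (∀ s, A s)) : Prop :=
  Separable P ∧ Separable P' ∧
  ∃ (s : Fin m) (a b : A s), a ≠ b ∧
    (∀ z : ∀ t, A t,
      P.rank (Function.update z s b) = P.rank (Function.update z s a) + 1 ∧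
      P'.rank (Function.update z s b) = P.rank (Function.update z s a) ∧
      P'.rank (Function.update z s a) = P.rank (Function.update z s a) + 1) ∧
    ∀ c : ∀ t, A t, c s ≠ a → c s ≠ b → P.rank c = P'.rank c

/-- Edges of the graph `G_{~/~⁺}`: adjacency or adjacency⁺. -/
def AdjEdge (P P' : Pref (∀ s, A s)) : Prop :=
  Adjacent P P' ∨ AdjacentPlus P P'

end AdjPlus

/-- A path in a graph with edge relation `edge` and vertex set `S`, connecting `x` to `y`. -/
def IsPath {β : Type u} (edge : β → β → Prop) (S : Set β) (x y : β)
    (l : List β) : Prop :=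
  2 ≤ l.length ∧ l.Nodup ∧ l.head? = some x ∧ l.getLast? = some y ∧
    (∀ z ∈ l, z ∈ S) ∧ List.Chain' edge l

/-- A path of preferences has `{a,b}`-restoration if the relative ranking of `a` and `b`
flips more than once along the path. -/
def HasRestoration {β : Type u} (l : List (Pref β)) (a b : β) : Prop :=
  ∃ o p q : Fin l.length, o < p ∧ p < q ∧
    (((l.get o).rel a b ∧ (l.get p).rel b a ∧ (l.get q).rel a b) ∨
     ((l.get o).rel b a ∧ (l.get p).rel a b ∧ (l.get q).rel b a))

section RichDom

variable {m : ℕ} {A : Fin m → Type u} [∀ s, Fintype (A s)] [∀ s, Nonempty (A s)]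

/-- The Interior⁺ property. -/
def InteriorPlus (D : Set (Pref (∀ s, A s))) : Prop :=
  ∀ P ∈ D, ∀ P' ∈ D, P ≠ P' → Pref.top P = Pref.top P' →
    ∃ l : List (Pref (∀ s, A s)),
      IsPath AdjEdge D P P' l ∧ ∀ Q ∈ l, Pref.top Q = Pref.top P

/-- The Exterior⁺ property (including the no-detour condition). -/
def ExteriorPlus (D : Set (Pref (∀ s, A s))) : Prop :=
  ∀ P ∈ D, ∀ P' ∈ D, Pref.top P ≠ Pref.top P' →
    (∀ a b : ∀ s, A s, ∃ l : List (Pref (∀ s, A s)),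
        IsPath AdjEdge D P P' l ∧ ¬ HasRestoration l a b) ∧
    ∀ s : Fin m, SimilarAt (Pref.top P) (Pref.top P') s →
      ∃ l : List (Pref (∀ s, A s)),
        IsPath AdjEdge D P P' l ∧ ∀ Q ∈ l, ∀ t, t ≠ s → Pref.top Q t = Pref.top P t

/-- A rich domain: minimally rich, diversity⁺, Interior⁺ and Exterior⁺. -/
def RichDomain (D : Set (Pref (∀ s, A s))) : Prop :=
  MinimallyRich D ∧ DiversityPlus D ∧ InteriorPlus D ∧ ExteriorPlus D

end RichDom

/-- The weak interval `⟨x,y⟩` w.r.t. a linear order. -/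
def wInterval {β : Type u} (lin : LinearOrder β) (x y : β) : Set β :=
  {z | (lin.le x z ∧ lin.le z y) ∨ (lin.le y z ∧ lin.le z x)}

/-- The strict (open) interval `Int⟨x,y⟩` w.r.t. a linear order. -/
def sInterval {β : Type u} (lin : LinearOrder β) (x y : β) : Set β :=
  {z | (lin.lt x z ∧ lin.lt z y) ∨ (lin.lt y z ∧ lin.lt z x)}

/-- `x` and `y` are marginal thresholds w.r.t. `lin`. -/
def MarginalThresholds {β : Type u} (lin : LinearOrder β) (x y : β) : Prop :=
  x = y ∨ (x ≠ y ∧ 3 ≤ (wInterval lin x y).ncard)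

/-- `x` and `y` are strongly connected in the marginal domain `E`: `x ≈ y`. -/
def StronglyConnected {β : Type u} (E : Set (Pref β)) (x y : β) : Prop :=
  ∃ Q ∈ E, ∃ Q' ∈ E,
    Pref.rank Q x = 1 ∧ Pref.rank Q y = 2 ∧ Pref.rank Q' y = 1 ∧ Pref.rank Q' x = 2 ∧
    ∀ z, z ≠ x → z ≠ y → Pref.rank Q z = Pref.rank Q' z

/-- Edges of the graph `G_≈`. -/
def scEdge {β : Type u} (E : Set (Pref β)) (x y : β) : Prop :=
  x ≠ y ∧ StronglyConnected E x y

/-- The graph with edge relation `edge` on vertex set `B` is connected. -/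
def GraphConnectedOn {β : Type u} (edge : β → β → Prop) (B : Set β) : Prop :=
  ∀ x ∈ B, ∀ y ∈ B, x ≠ y → ∃ l : List β, IsPath edge B x y l

/-- `v` is a leaf of the graph with edge relation `edge` on vertex set `B`:
it has a unique neighbor. -/
def IsLeaf {β : Type u} (edge : β → β → Prop) (B : Set β) (v : β) : Prop :=
  v ∈ B ∧ ∃! w, w ∈ B ∧ edge v w

/-- A hybrid marginal preference on `lin` w.r.t. marginal thresholds `ylo`, `yhi`. -/
def HybridPref {β : Type u} [Finite β] [Nonempty β] (lin : LinearOrder β)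
    (ylo yhi : β) (Q : Pref β) : Prop :=
  ∀ a b : β, a ≠ b → a ∈ sInterval lin (Pref.top Q) b →
    a ∉ sInterval lin ylo yhi → Q.rel a b

section MDH

variable {m : ℕ} {A : Fin m → Type u} [∀ s, Fintype (A s)] [∀ s, Nonempty (A s)]

/-- `xlo` and `xhi` are thresholds: marginal thresholds on every component. -/
def Thresholds (prec : ∀ s, LinearOrder (A s)) (xlo xhi : ∀ s, A s) : Prop :=
  ∀ s, MarginalThresholds (prec s) (xlo s) (xhi s)

/-- A multidimensional hybrid preference on `≺ = ∏ prec s` w.r.t. thresholds `xlo`, `xhi`. -/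
def MDHybrid (prec : ∀ s, LinearOrder (A s)) (xlo xhi : ∀ s, A s)
    (P : Pref (∀ s, A s)) : Prop :=
  ∀ (s : Fin m) (a b : ∀ t, A t), SimilarAt a b s →
    (a s = Pref.top P s → P.rel a b) ∧
    (a s ∈ sInterval (prec s) (Pref.top P s) (b s) →
      a s ∉ sInterval (prec s) (xlo s) (xhi s) → P.rel a b)

/-- A multidimensional single-peaked preference on `≺ = ∏ prec s`. -/
def MSP (prec : ∀ s, LinearOrder (A s)) (P : Pref (∀ s, A s)) : Prop :=
  ∀ (s : Fin m) (a b : ∀ t, A t), SimilarAt a b s →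
    a s ∈ wInterval (prec s) (Pref.top P s) (b s) → P.rel a b

/-- A multidimensional hybrid domain on `≺` w.r.t. thresholds `xlo`, `xhi`. -/
def MDHybridDomain (D : Set (Pref (∀ s, A s))) (prec : ∀ s, LinearOrder (A s))
    (xlo xhi : ∀ s, A s) : Prop :=
  Thresholds prec xlo xhi ∧
  (∀ P ∈ D, MDHybrid prec xlo xhi P) ∧
  ∀ s, GraphConnectedOn (scEdge (margDomain D s)) Set.univ ∧
    (xlo s ≠ xhi s →
      ∀ v, ¬ IsLeaf (scEdge (margDomain D s)) (wInterval (prec s) (xlo s) (xhi s)) v)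

/-- Strong connectedness⁺ of two alternatives: `a ≈⁺ b`. -/
def SCPlus (D : Set (Pref (∀ s, A s))) (a b : ∀ s, A s) : Prop :=
  ∃ P ∈ D, ∃ P' ∈ D, Pref.top P = a ∧ Pref.top P' = b ∧ AdjacentPlus P P'

end MDH

/-- The outcome of the fixed-ballot formula
`max_{J ⊆ N} ( min_{i ∈ J} ( r₁(Qᵢ), b_J ) )`. -/
def fbrValue {β : Type u} (lin : LinearOrder β) {n : ℕ} [Fintype β]
    (bal : Finset (Fin n) → β) (tops : Fin n → β) : β :=
  letI := lin
  letI : DecidableEq β := lin.toDecidableEq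
  Finset.univ.sup' ⟨∅, Finset.mem_univ _⟩
    fun J : Finset (Fin n) =>
      (insert (bal J) (J.image tops)).inf' (Finset.insert_nonempty _ _) id

/-- Fixed ballots: ballot unanimity and monotonicity. -/
def FBRBallots {β : Type u} [Fintype β] [Nonempty β] (lin : LinearOrder β) {n : ℕ}
    (bal : Finset (Fin n) → β) : Prop :=
  bal ∅ = @Finset.min' β lin Finset.univ Finset.univ_nonempty ∧
  bal Finset.univ = @Finset.max' β lin Finset.univ Finset.univ_nonempty ∧
  ∀ J J' : Finset (Fin n), J ⊂ J' → lin.le (bal J) (bal J')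

/-- A fixed ballot rule (FBR) on the linear order `lin`. -/
def IsFBR {β : Type u} [Fintype β] [Nonempty β] (lin : LinearOrder β)
    (E : Set (Pref β)) {n : ℕ} (f : (Fin n → E) → β) : Prop :=
  ∃ bal : Finset (Fin n) → β, FBRBallots lin bal ∧
    ∀ p : Fin n → E, f p = fbrValue lin bal fun i => Pref.top (p i).1

/-- An `(xlo, xhi)`-FBR: an FBR that additionally satisfies the
constrained-dictatorship condition. -/
def IsConstrainedFBR {β : Type u} [Fintype β] [Nonempty β] (lin : LinearOrder β)
    (xlo xhi : β) (E : Set (Pref β)) {n : ℕ} (f : (Fin n → E) → β) : Prop :=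
  ∃ bal : Finset (Fin n) → β, FBRBallots lin bal ∧
    (∀ p : Fin n → E, f p = fbrValue lin bal fun i => Pref.top (p i).1) ∧
    ∃ i : Fin n, ∀ J : Finset (Fin n),
      (i ∈ J → lin.le xhi (bal J)) ∧ (i ∉ J → lin.le (bal J) xlo)

/-!
Decomposability yields more than strategy-proofness. Give the `s`-th marginal rule an extra
voter who dictates every other component: the resulting rule is again strategy-proof, so whenever
a unilateral deviation changes the `s`-th component of the outcome, the deviator prefers the old
value to the new one in *every* context. Hence an adjacent switch never changes the outcome (the
one pair it reverses would have to occur in two different contexts), and an adjacent⁺ switch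
reversing the pairs `(z[s ↦ c], z[s ↦ d])` can only move component `s` from `c` to `d`.

An adjacent⁺ switch `S ~⁺ S'` between preferences with the same top is inert as well, by induction
on the voters whose top differs from that top. If it mattered at a profile where voter `k` is such a
voter, while it does not once `k` reports `S` or `S'`, then along a restoration-free Exterior⁺ path
from `k`'s preference to `S` (resp. `S'`) some edge would have to reverse the pair `(w[s ↦ c],
w[s ↦ d])`, so `k`'s preference ranks that pair unlike both `S` and `S'`; but `S` and `S'` rank it
oppositely. Interior⁺ joins any two preferences with a common top by such switches.
-/

namespace Pref

variable {α : Type u}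

theorem rel_irrefl (P : Pref α) (a : α) : ¬ P.rel a a := fun h => P.asymm a a h h

theorem rank_lt_of_rel [Finite α] (P : Pref α) {u v : α} (h : P.rel u v) :
    P.rank u < P.rank v := by
  have hsub : {b | P.rel b u} ⊂ {b | P.rel b v} :=
    ⟨fun b hb => P.trans b u v hb h, fun hle => P.rel_irrefl u (hle h)⟩
  simpa [rank] using Set.ncard_lt_ncard hsub (Set.toFinite _)

theorem rel_iff_rank_lt [Finite α] (P : Pref α) {u v : α} :
    P.rel u v ↔ P.rank u < P.rank v := by
  refine ⟨P.rank_lt_of_rel, fun h => ?_⟩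
  rcases P.total u v (by rintro rfl; exact lt_irrefl _ h) with h' | h'
  · exact h'
  · exact absurd (P.rank_lt_of_rel h') (not_lt.2 h.le)

theorem rank_injective [Finite α] (P : Pref α) : Function.Injective P.rank := by
  intro u v h
  by_contra hne
  rcases P.total u v hne with h' | h' <;> have := P.rank_lt_of_rel h' <;> omega

theorem top_marg {m : ℕ} {A : Fin m → Type u} [∀ s, Fintype (A s)] [∀ s, Nonempty (A s)]
    (P : Pref (∀ s, A s)) (s : Fin m) : (P.marg s).top = P.top s := by
  by_contra h
  have h₁ : P.rel (Function.update P.top s (P.marg s).top) (Function.update P.top s (P.top s)) :=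
    (P.marg s).top_spec (P.top s) (Ne.symm h)
  rw [Function.update_eq_self] at h₁
  exact P.asymm _ _ h₁ (P.top_spec _ fun he => h (by simpa using congrFun he s))

end Pref

def Flips {β : Type u} (P Q : Pref β) (u v : β) : Prop :=
  P.rel u v ∧ Q.rel v u

theorem Adjacent.exists_eq_of_flips {β : Type u} [Finite β] {P Q : Pref β} (h : Adjacent P Q) :
    ∃ a b, ∀ u v, Flips P Q u v → u = a ∧ v = b := by
  classical
  obtain ⟨a, b, hab, hb, hb', ha', hoff⟩ := h
  refine ⟨a, b, fun u v ⟨huv, hvu⟩ => ?_⟩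
  rw [P.rel_iff_rank_lt] at huv
  rw [Q.rel_iff_rank_lt] at hvu
  have hQ : ∀ c, Q.rank c = if c = a then P.rank a + 1 else if c = b then P.rank a
      else P.rank c := by
    intro c
    split_ifs with hca hcb
    · rw [hca, ha']
    · rw [hcb, hb']
    · exact (hoff c hca hcb).symm
  rw [hQ, hQ] at hvu
  split_ifs at hvu <;> subst_vars <;> first | exact ⟨rfl, rfl⟩ | omega

section Flips

variable {m : ℕ} {A : Fin m → Type u} [∀ s, Fintype (A s)]

open Function

theorem AdjacentPlus.exists_flips_iff {P Q : Pref (∀ s, A s)} (h : AdjacentPlus P Q) :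
    ∃ (s : Fin m) (c d : A s), c ≠ d ∧
      ∀ u v, Flips P Q u v ↔ ∃ z, u = update z s c ∧ v = update z s d := by
  classical
  obtain ⟨-, -, s, c, d, hcd, hranks, hoff⟩ := h
  have facts : ∀ x, (x s = c ∧ Q.rank x = P.rank x + 1) ∨
      (x s = d ∧ P.rank x = P.rank (update x s c) + 1 ∧ Q.rank x = P.rank (update x s c)) ∨
      (x s ≠ c ∧ x s ≠ d ∧ Q.rank x = P.rank x) := by
    intro x
    obtain ⟨h₁, h₂, h₃⟩ := hranks x
    by_cases hc : x s = c
    · rw [← hc, update_eq_self] at h₃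
      exact Or.inl ⟨hc, h₃⟩
    by_cases hd : x s = d
    · rw [← hd, update_eq_self] at h₁ h₂
      exact Or.inr (Or.inl ⟨hd, h₁, h₂⟩)
    exact Or.inr (Or.inr ⟨hc, hd, (hoff x hc hd).symm⟩)
  refine ⟨s, c, d, hcd, fun u v => ⟨fun ⟨huv, hvu⟩ => ?_, ?_⟩⟩
  · rw [P.rel_iff_rank_lt] at huv
    rw [Q.rel_iff_rank_lt] at hvu
    rcases facts u with ⟨hu, hQu⟩ | ⟨hu, hPu, hQu⟩ | ⟨hu₁, hu₂, hQu⟩ <;>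
      rcases facts v with ⟨hv, hQv⟩ | ⟨hv, hPv, hQv⟩ | ⟨hv₁, hv₂, hQv⟩ <;> try omega
    -- the ranks rule out every case but `u s = c`, `v s = d`
    exact ⟨v, P.rank_injective (by omega), (update_eq_self_iff.2 hv.symm).symm⟩
  · rintro ⟨z, rfl, rfl⟩
    obtain ⟨h₁, h₂, h₃⟩ := hranks z
    exact ⟨P.rel_iff_rank_lt.2 (by omega), Q.rel_iff_rank_lt.2 (by omega)⟩

theorem AdjEdge.eq_of_flips {P Q : Pref (∀ s, A s)} (h : AdjEdge P Q) {u u' v : ∀ s, A s}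
    (hu : Flips P Q u v) (hu' : Flips P Q u' v) : u = u' := by
  rcases h with h | h
  · obtain ⟨a, b, hab⟩ := h.exists_eq_of_flips
    exact (hab _ _ hu).1.trans (hab _ _ hu').1.symm
  · classical
    obtain ⟨s, c, d, -, hflips⟩ := h.exists_flips_iff
    obtain ⟨z, rfl, hz⟩ := (hflips _ v).1 hu
    obtain ⟨z', rfl, hz'⟩ := (hflips _ v).1 hu'
    simpa using congrArg (update · s c) (hz.symm.trans hz')

end Flips

theorem Function.update_induction {ι α : Type*} [Fintype ι] [DecidableEq ι]
    (good : ι → α → Prop) (C : (ι → α) → Prop) (base : ∀ r, (∀ k, good k (r k)) → C r)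
    (step : ∀ r k, ¬ good k (r k) → (∀ a, good k a → C (Function.update r k a)) → C r)
    (r : ι → α) : C r := by
  classical
  induction hN : (Finset.univ.filter fun k => ¬ good k (r k)).card
    using Nat.strong_induction_on generalizing r with
  | _ N ih =>
    by_cases hall : ∀ k, good k (r k)
    · exact base r hall
    obtain ⟨k, hk⟩ := not_forall.mp hall
    refine step r k hk fun a ha => ih _ ?_ _ rfl
    rw [← hN]
    refine Finset.card_lt_card ((Finset.ssubset_iff_of_subset fun j => ?_).2
      ⟨k, by simp [hk], by simp [ha]⟩)
    by_cases hj : j = k <;> simp [hj, ha, Function.update_of_ne]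

section Paths

variable {β : Type u}

theorem IsPath.exists_edge {edge : β → β → Prop} {S : Set β} {x y : β} {l : List β}
    (hl : IsPath edge S x y l) (p : β → Prop) (hx : p x) (hy : ¬ p y) :
    ∃ u ∈ l, ∃ v ∈ l, edge u v ∧ p u ∧ ¬ p v := by
  obtain ⟨-, -, hhead, hlast, -, hchain⟩ := hl
  by_contra! h
  refine hy ((List.IsChain.iff_mem.mp hchain).induction p l
    (fun u v ⟨hu, hv, huv⟩ => h u hu v hv huv) (fun hne => ?_) y (List.mem_of_getLast? hlast))
  obtain ⟨l, rfl⟩ := List.head?_eq_some_iff.mp hhead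
  exact hx

theorem IsPath.mem {edge : β → β → Prop} {S : Set β} {x y : β} {l : List β}
    (hl : IsPath edge S x y l) {z : β} (hz : z ∈ l) : z ∈ S :=
  hl.2.2.2.2.1 z hz

theorem rel_iff_of_not_hasRestoration {l : List (Pref β)} {a b : β} (hab : a ≠ b)
    (hr : ¬ HasRestoration l a b) {x y : Pref β} (hx : l.head? = some x)
    (hy : l.getLast? = some y) (hxy : x.rel a b ↔ y.rel a b) :
    ∀ P ∈ l, P.rel a b ↔ x.rel a b := by
  intro P hP
  obtain ⟨j, hj, rfl⟩ := List.getElem_of_mem hP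
  rw [List.head?_eq_getElem?] at hx
  rw [List.getLast?_eq_getElem?] at hy
  have h0 : l[0] = x := (List.getElem?_eq_some_iff.mp hx).2
  have hL : l[l.length - 1] = y := (List.getElem?_eq_some_iff.mp hy).2
  by_contra h
  have hj0 : 0 < j := Nat.pos_of_ne_zero (by rintro rfl; exact h (h0 ▸ Iff.rfl))
  have hjL : j < l.length - 1 :=
    lt_of_le_of_ne (by omega) (by rintro rfl; exact h (hL ▸ hxy.symm))
  have swap : ∀ Q : Pref β, ¬ Q.rel a b → Q.rel b a :=
    fun Q hQ => (Q.total a b hab).resolve_left hQ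
  refine hr ⟨⟨0, by omega⟩, ⟨j, hj⟩, ⟨l.length - 1, by omega⟩, hj0, hjL, ?_⟩
  simp only [List.get_eq_getElem, h0, hL]
  by_cases hxab : x.rel a b
  · exact Or.inl ⟨hxab, swap _ fun h' => h (iff_of_true h' hxab), hxy.1 hxab⟩
  · exact Or.inr ⟨swap _ hxab, by tauto, swap _ (hxy.not.1 hxab)⟩

end Paths

section MarginalRules

variable {β : Type u} {E : Set (Pref β)} {n : ℕ}

theorem unanimous_dictator [Finite β] [Nonempty β] (j : Fin n) :
    Unanimous E fun q : Fin n → E => (q j).1.top :=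
  fun _ _ h => h j

theorem strategyProof_dictator [Finite β] [Nonempty β] (j : Fin n) :
    StrategyProof E fun q : Fin n → E => (q j).1.top := by
  intro q i Q hne
  obtain rfl | hij := eq_or_ne i j
  · simp only [Function.update_self] at hne ⊢
    exact (q i).1.top_spec _ (Ne.symm hne)
  · simp [Function.update_of_ne hij.symm] at hne

theorem Unanimous.comp_init [Finite β] [Nonempty β] {g : (Fin n → E) → β}
    (hg : Unanimous E g) : Unanimous E fun q : Fin (n + 1) → E => g (Fin.init q) :=
  fun _ a h => hg _ a fun _ => h _

theorem StrategyProof.comp_init {g : (Fin n → E) → β} (hg : StrategyProof E g) :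
    StrategyProof E fun q : Fin (n + 1) → E => g (Fin.init q) := by
  intro q j Q hne
  rcases Fin.eq_castSucc_or_eq_last j with ⟨j, rfl⟩ | rfl
  · simp only [Fin.init_update_castSucc] at hne ⊢
    exact hg _ j Q hne
  · simp [Fin.init_update_last] at hne

end MarginalRules

section Decomposition

variable {m : ℕ} {A : Fin m → Type u}

open Function

def ComponentwiseStrategyProof (D : Set (Pref (∀ s, A s))) {n : ℕ}
    (f : (Fin n → D) → ∀ s, A s) : Prop :=
  ∀ (p : Fin n → D) (i : Fin n) (Q : D) (s : Fin m), f p s ≠ f (update p i Q) s →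
    ∀ w : ∀ t, A t, (p i).1.rel (update w s (f p s)) (update w s (f (update p i Q) s))

theorem componentwiseStrategyProof_of_decomposableDomain [∀ s, Fintype (A s)]
    [∀ s, Nonempty (A s)] {D : Set (Pref (∀ s, A s))} {n : ℕ} (hmin : MinimallyRich D)
    (hdec : DecomposableDomain D) (hn : 2 ≤ n)
    {f : (Fin n → D) → ∀ s, A s} (hu : Unanimous D f) (hsp : StrategyProof D f) :
    ComponentwiseStrategyProof D f := by
  classical
  obtain ⟨g, hfg, hg⟩ := (hdec n hn f).mp ⟨hu, hsp⟩
  intro p i Q s hne w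
  obtain ⟨R, hR, rfl⟩ := hmin w
  let G : ∀ t, (Fin (n + 1) → margDomain D t) → A t :=
    update (fun t q => (q (Fin.last n)).1.top) s fun q => g s (Fin.init q)
  have hG : ∀ t, Unanimous (margDomain D t) (G t) ∧ StrategyProof (margDomain D t) (G t) :=
    (forall_update_iff _ fun t (G : (Fin (n + 1) → margDomain D t) → A t) =>
      Unanimous _ G ∧ StrategyProof _ G).2
      ⟨⟨(hg s).1.comp_init, (hg s).2.comp_init⟩,
        fun _ _ => ⟨unanimous_dictator _, strategyProof_dictator _⟩⟩
  let F : (Fin (n + 1) → D) → ∀ t, A t := fun q t => G t (margProfile D t q)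
  have hF : StrategyProof D F := ((hdec (n + 1) (by omega) F).mpr ⟨G, fun _ _ => rfl, hG⟩).2
  have hFsnoc : ∀ q : Fin n → D, F (Fin.snoc q ⟨R, hR⟩) = update R.top s (f q s) := by
    intro q
    funext t
    obtain rfl | ht := eq_or_ne t s
    · simp only [F, G, update_self, hfg q t]
      congr 1
      funext k
      simp [Fin.init, margProfile]
    · simp [F, G, ht, margProfile, Pref.top_marg]
  have key := hF (Fin.snoc p ⟨R, hR⟩) i.castSucc Q
  rw [← Fin.snoc_update, hFsnoc, hFsnoc] at key
  simpa using key fun h => hne (by simpa using congrFun h s)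

end Decomposition

namespace ComponentwiseStrategyProof

variable {m : ℕ} {A : Fin m → Type u} {D : Set (Pref (∀ s, A s))} {n : ℕ}
  {f : (Fin n → D) → ∀ s, A s}

open Function

theorem flips (hf : ComponentwiseStrategyProof D f) {p : Fin n → D} {i : Fin n} {Q : D}
    {s : Fin m} (h : f p s ≠ f (update p i Q) s) (w : ∀ t, A t) :
    Flips (p i).1 Q.1 (update w s (f p s)) (update w s (f (update p i Q) s)) := by
  refine ⟨hf p i Q s h w, ?_⟩
  simpa using hf (update p i Q) i (p i) s (by simpa using h.symm) w

theorem eq_update_of_adjacent [∀ s, Fintype (A s)] (hf : ComponentwiseStrategyProof D f)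
    (hm : 2 ≤ m) (hcard : ∀ s, 2 ≤ Fintype.card (A s)) {p : Fin n → D} {i : Fin n} {Q : D}
    (hadj : Adjacent (p i).1 Q.1) : f p = f (update p i Q) := by
  by_contra hne
  obtain ⟨s, hs⟩ := not_forall.mp (mt funext hne)
  obtain ⟨t, hts⟩ := Fintype.exists_ne_of_one_lt_card (by rw [Fintype.card_fin]; omega) s
  obtain ⟨c, c', hcc'⟩ := Fintype.exists_pair_of_one_lt_card (hcard t)
  obtain ⟨a, b, hab⟩ := hadj.exists_eq_of_flips
  have h := (hab _ _ (hf.flips hs (update (f p) t c))).1.trans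
    (hab _ _ (hf.flips hs (update (f p) t c'))).1.symm
  exact hcc' (by simpa [update_of_ne hts] using congrFun h t)

theorem apply_eq_of_flips (hf : ComponentwiseStrategyProof D f) {p : Fin n → D} {i : Fin n}
    {Q : D} {s : Fin m} {c d : A s}
    (hflips : ∀ u v, Flips (p i).1 Q.1 u v → ∃ z, u = update z s c ∧ v = update z s d)
    (hne : f p ≠ f (update p i Q)) : f p s = c ∧ f (update p i Q) s = d := by
  obtain ⟨t, ht⟩ := not_forall.mp (mt funext hne)
  have h := hf.flips ht (f p)
  rw [update_eq_self] at h
  obtain ⟨z, hz, hz'⟩ := hflips _ _ h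
  have hzt := congrFun hz t
  have hzt' := congrFun hz' t
  obtain rfl | hts := eq_or_ne t s
  · simp only [update_self] at hzt hzt'
    exact ⟨hzt, hzt'⟩
  · simp only [update_self, update_of_ne hts] at hzt hzt'
    exact absurd (hzt.trans hzt'.symm) ht

theorem rel_iff_not_rel_of_adjEdge [∀ s, Fintype (A s)] (hf : ComponentwiseStrategyProof D f)
    {q : Fin n → D} {i k : Fin n} (hik : i ≠ k) {S' y : D} {s : Fin m} {γ δ : A s}
    (hγδ : γ ≠ δ)
    (hflips : ∀ u v, Flips (q i).1 S'.1 u v → ∃ z, u = update z s γ ∧ v = update z s δ)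
    (hedge : AdjEdge (q k).1 y.1) (hne : f q ≠ f (update q i S'))
    (heq : f (update q k y) = f (update (update q k y) i S')) (w : ∀ t, A t) :
    (q k).1.rel (update w s γ) (update w s δ) ↔ ¬ y.1.rel (update w s γ) (update w s δ) := by
  obtain ⟨hγ, hδ⟩ := hf.apply_eq_of_flips hflips hne
  -- whichever of `γ`, `δ` differs from `ε` gives a pair reversed by the edge `q k ~ y`, and the
  -- edge cannot reverse two such pairs, as they share their lower element `update w s ε`
  obtain ⟨ε, hε⟩ : ∃ ε, f (update q k y) s = ε := ⟨_, rfl⟩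
  have hε' : f (update (update q i S') k y) s = ε := by rw [update_comm hik, ← heq, hε]
  have flips₁ : γ ≠ ε → Flips (q k).1 y.1 (update w s γ) (update w s ε) := by
    intro h
    have := hf.flips (p := q) (i := k) (Q := y) (s := s) (by rwa [hγ, hε]) w
    rwa [hγ, hε] at this
  have flips₂ : δ ≠ ε → Flips (q k).1 y.1 (update w s δ) (update w s ε) := by
    intro h
    have := hf.flips (p := update q i S') (i := k) (Q := y) (s := s) (by rwa [hδ, hε']) w
    rwa [update_of_ne hik.symm, hδ, hε'] at this
  by_cases h₁ : γ = ε
  · subst h₁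
    obtain ⟨hx, hy⟩ := flips₂ hγδ.symm
    exact iff_of_false ((q k).1.asymm _ _ hx) (not_not.2 hy)
  by_cases h₂ : δ = ε
  · subst h₂
    obtain ⟨hx, hy⟩ := flips₁ hγδ
    exact iff_of_true hx (y.1.asymm _ _ hy)
  · exact absurd (by simpa using congrFun (hedge.eq_of_flips (flips₁ h₁) (flips₂ h₂)) s) hγδ

theorem rel_iff_not_rel_of_isPath [∀ s, Fintype (A s)] (hf : ComponentwiseStrategyProof D f)
    {r : Fin n → D} {i k : Fin n} (hik : i ≠ k) {S' : D} {s : Fin m} {γ δ : A s}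
    (hγδ : γ ≠ δ)
    (hflips : ∀ u v, Flips (r i).1 S'.1 u v → ∃ z, u = update z s γ ∧ v = update z s δ)
    (hne : f r ≠ f (update r i S')) {T : D}
    (heq : f (update r k T) = f (update (update r k T) i S'))
    {l : List (Pref (∀ s, A s))} (hl : IsPath AdjEdge D (r k).1 T.1 l) (w : ∀ t, A t)
    (hnr : ¬ HasRestoration l (update w s γ) (update w s δ)) :
    (r k).1.rel (update w s γ) (update w s δ) ↔ ¬ T.1.rel (update w s γ) (update w s δ) := by
  have ⟨_, _, hhead, hlast, _⟩ := hl
  by_contra hends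
  have hconst := rel_iff_of_not_hasRestoration (fun h => hγδ (by simpa using congrFun h s))
    hnr hhead hlast (by tauto)
  obtain ⟨x, hx, y, hy, hxy, hpx, hpy⟩ := hl.exists_edge
    (fun x => ∀ hx : x ∈ D, f (update r k ⟨x, hx⟩) ≠ f (update (update r k ⟨x, hx⟩) i S'))
    (fun _ => by simpa using hne) (fun h => h T.2 heq)
  have hxD := hl.mem hx
  have hyD := hl.mem hy
  have hcross := hf.rel_iff_not_rel_of_adjEdge (q := update r k ⟨x, hxD⟩) (y := ⟨y, hyD⟩) hik
    hγδ (by simpa [update_of_ne hik] using hflips) (by simpa using hxy) (hpx hxD)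
    (by simpa using not_not.mp fun h => hpy fun _ => h) w
  simp only [update_self] at hcross
  rw [hconst x hx, hconst y hy] at hcross
  exact iff_not_self hcross

theorem eq_update_of_adjacentPlus [∀ s, Fintype (A s)] [∀ s, Nonempty (A s)]
    (hf : ComponentwiseStrategyProof D f) (hu : Unanimous D f) (hext : ExteriorPlus D)
    {q : Fin n → D} {i : Fin n} {Q : D} (hadj : AdjacentPlus (q i).1 Q.1)
    (htop : (q i).1.top = Q.1.top) : f q = f (update q i Q) := by
  obtain ⟨s, γ, δ, hγδ, hflips⟩ := hadj.exists_flips_iff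
  generalize hS : q i = S at hflips htop
  revert hS
  refine update_induction (fun _ T => T.1.top = S.1.top)
    (fun r => r i = S → f r = f (update r i Q)) (fun r hr hri => ?_) (fun r k hk ih hri => ?_) q
  · rw [hu r _ hr, hu _ S.1.top fun j => ?_]
    obtain rfl | hj := eq_or_ne j i
    · simpa using htop.symm
    · simpa [update_of_ne hj] using hr j
  have hik : i ≠ k := by rintro rfl; exact hk (by rw [hri])
  by_contra hne
  let w : ∀ t, A t := Classical.arbitrary _
  have track : ∀ T : D, T.1.top = S.1.top → ((r k).1.rel (update w s γ) (update w s δ) ↔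
      ¬ T.1.rel (update w s γ) (update w s δ)) := by
    intro T hT
    obtain ⟨l, hl, hnr⟩ := (hext _ (r k).2 _ T.2 fun h => hk (h.trans hT)).1
      (update w s γ) (update w s δ)
    exact hf.rel_iff_not_rel_of_isPath hik hγδ (by rw [hri]; exact fun u v => (hflips u v).1)
      hne (ih T hT (by rw [update_of_ne hik, hri])) hl w hnr
  obtain ⟨hS, hQ⟩ := (hflips _ _).2 ⟨w, rfl, rfl⟩
  exact ((track S rfl).symm.trans (track Q htop.symm)).2 (Q.1.asymm _ _ hQ) hS

theorem eq_update_of_adjEdge [∀ s, Fintype (A s)] [∀ s, Nonempty (A s)]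
    (hf : ComponentwiseStrategyProof D f) (hm : 2 ≤ m) (hcard : ∀ s, 2 ≤ Fintype.card (A s))
    (hu : Unanimous D f) (hext : ExteriorPlus D) {q : Fin n → D} {i : Fin n} {Q : D}
    (hedge : AdjEdge (q i).1 Q.1) (htop : (q i).1.top = Q.1.top) : f q = f (update q i Q) :=
  hedge.elim (hf.eq_update_of_adjacent hm hcard)
    (hf.eq_update_of_adjacentPlus hu hext · htop)

theorem eq_update_of_top_eq [∀ s, Fintype (A s)] [∀ s, Nonempty (A s)]
    (hf : ComponentwiseStrategyProof D f) (hm : 2 ≤ m) (hcard : ∀ s, 2 ≤ Fintype.card (A s))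
    (hu : Unanimous D f) (hint : InteriorPlus D) (hext : ExteriorPlus D) {q : Fin n → D}
    {i : Fin n} {Q : D} (htop : (q i).1.top = Q.1.top) : f q = f (update q i Q) := by
  obtain hQ | hQ := eq_or_ne (q i) Q
  · rw [← hQ, update_eq_self]
  obtain ⟨l, hl, hltop⟩ := hint _ (q i).2 _ Q.2 (fun h => hQ (Subtype.ext h)) htop
  by_contra hne
  obtain ⟨x, hx, y, hy, hxy, hpx, hpy⟩ := hl.exists_edge
    (fun x => ∀ hx : x ∈ D, f q = f (update q i ⟨x, hx⟩)) (fun _ => by simp)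
    (fun h => hne (h Q.2))
  have hxD := hl.mem hx
  refine hpy fun hyD => (hpx hxD).trans ?_
  simpa using hf.eq_update_of_adjEdge hm hcard hu hext (q := update q i ⟨x, hxD⟩) (i := i)
    (Q := ⟨y, hyD⟩) (by simpa using hxy) (by rw [hltop y hy]; simpa using hltop x hx)

end ComponentwiseStrategyProof

/-- On a rich decomposable domain, every strategy-proof unanimous rule
satisfies the tops-only property. -/
theorem stmt_6 {m : ℕ} (hm : 2 ≤ m) {A : Fin m → Type u}
    [∀ s, Fintype (A s)] [∀ s, Nonempty (A s)]
    (hcard : ∀ s, 2 ≤ Fintype.card (A s))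
    (D : Set (Pref (∀ s, A s)))
    (hrich : RichDomain D)
    (hdec : DecomposableDomain D)
    (n : ℕ) (hn : 2 ≤ n)
    (f : (Fin n → D) → (∀ s, A s))
    (hu : Unanimous D f) (hsp : StrategyProof D f) :
    TopsOnly D f := by
  obtain ⟨hmin, -, hint, hext⟩ := hrich
  have hf := componentwiseStrategyProof_of_decomposableDomain hmin hdec hn hu hsp
  intro p p' htops
  refine Function.update_induction (fun k Q => Q = p' k)
    (fun r => (∀ k, (r k).1.top = (p' k).1.top) → f r = f p') (fun r hr _ => by rw [funext hr])
    (fun r k _ ih hr => ?_) p htops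
  rw [hf.eq_update_of_top_eq hm hcard hu hint hext (hr k), ih _ rfl fun j => ?_]
  obtain rfl | hj := eq_or_ne j k
  · simp
  · simpa [Function.update_of_ne hj] using hr j
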